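/- arXiv:2010.01391 — 10 statements merged into one kernel-verified Lean document; each statement's English description precedes it below -/
import Mathlib

section
/- Let R > 0 and u > √3. Set a = R/√(1 + u²), b = 2R/(1 + u²), R' = R√(u² − 3)/(2u), u' = (u² + 3)/(2u), a' = R'/√(1 + u'²), and b' = 2R'/(1 + u'²). Then a' = a√(a² − b²)/√(a² + 2b²) and b' = b√(a² − b²)·√(4a² − b²)/(a² + 2b²). -/
open Real

theorem stmt_4 (R u a b R' u' a' b' : ℝ) (hR : 0 < R) (hu : Real.sqrt 3 < u)
    (ha : a = R / Real.sqrt (1 + u ^ 2)) (hb : b = 2 * R / (1 + u ^ 2))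
    (hR' : R' = R * Real.sqrt (u ^ 2 - 3) / (2 * u)) (hu' : u' = (u ^ 2 + 3) / (2 * u))
    (ha' : a' = R' / Real.sqrt (1 + u' ^ 2)) (hb' : b' = 2 * R' / (1 + u' ^ 2)) :
    a' = a * Real.sqrt (a ^ 2 - b ^ 2) / Real.sqrt (a ^ 2 + 2 * b ^ 2) ∧
      b' = b * Real.sqrt (a ^ 2 - b ^ 2) * Real.sqrt (4 * a ^ 2 - b ^ 2) / (a ^ 2 + 2 * b ^ 2) := by
  have hu0 : 0 < u := lt_of_le_of_lt (Real.sqrt_nonneg 3) hu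
  have hu3 : 3 < u ^ 2 := by
    have h3 : Real.sqrt 3 ^ 2 = 3 := Real.sq_sqrt (by norm_num)
    nlinarith [Real.sqrt_nonneg 3]
  have hs : (0:ℝ) < 1 + u ^ 2 := by positivity
  -- basic squared values
  have ha2 : a ^ 2 = R ^ 2 / (1 + u ^ 2) := by
    rw [ha, div_pow, Real.sq_sqrt hs.le]
  have hR'2 : R' ^ 2 = R ^ 2 * (u ^ 2 - 3) / (4 * u ^ 2) := by
    rw [hR', div_pow, mul_pow, Real.sq_sqrt (by linarith)]
    ring
  have hu'2 : 1 + u' ^ 2 = (u ^ 2 + 1) * (u ^ 2 + 9) / (4 * u ^ 2) := by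
    rw [hu', div_pow]
    field_simp
    ring
  have hab : a ^ 2 - b ^ 2 = R ^ 2 * (u ^ 2 - 3) / (1 + u ^ 2) ^ 2 := by
    rw [ha2, hb]
    field_simp
    ring
  have h4ab : 4 * a ^ 2 - b ^ 2 = 4 * R ^ 2 * u ^ 2 / (1 + u ^ 2) ^ 2 := by
    rw [ha2, hb]
    field_simp
    ring
  have h2ab : a ^ 2 + 2 * b ^ 2 = R ^ 2 * (u ^ 2 + 9) / (1 + u ^ 2) ^ 2 := by
    rw [ha2, hb]
    field_simp
    ring
  have habnn : 0 ≤ a ^ 2 - b ^ 2 := by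
    rw [hab]
    apply div_nonneg _ (by positivity)
    nlinarith
  have h4abnn : 0 ≤ 4 * a ^ 2 - b ^ 2 := by
    rw [h4ab]; positivity
  have h2abpos : 0 < a ^ 2 + 2 * b ^ 2 := by
    rw [h2ab]; positivity
  have hu'pos : (0:ℝ) < 1 + u' ^ 2 := by
    rw [hu'2]; positivity
  have hR'nn : 0 ≤ R' := by
    rw [hR']; positivity
  have hann : 0 ≤ a := by rw [ha]; positivity
  have hbnn : 0 ≤ b := by rw [hb]; positivity
  constructor
  · have hL : 0 ≤ a' := by
      rw [ha']; exact div_nonneg hR'nn (Real.sqrt_nonneg _)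
    have hRH : 0 ≤ a * Real.sqrt (a ^ 2 - b ^ 2) / Real.sqrt (a ^ 2 + 2 * b ^ 2) := by
      apply div_nonneg (mul_nonneg hann (Real.sqrt_nonneg _)) (Real.sqrt_nonneg _)
    have hsq : a' ^ 2 = (a * Real.sqrt (a ^ 2 - b ^ 2) / Real.sqrt (a ^ 2 + 2 * b ^ 2)) ^ 2 := by
      rw [ha', div_pow, div_pow, mul_pow, Real.sq_sqrt hu'pos.le, Real.sq_sqrt habnn,
        Real.sq_sqrt h2abpos.le, hab, h2ab, ha2, hR'2, hu'2]
      field_simp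
      ring
    rw [← Real.sqrt_sq hL, hsq, Real.sqrt_sq hRH]
  · have hL : 0 ≤ b' := by
      rw [hb']; positivity
    have hRH : 0 ≤ b * Real.sqrt (a ^ 2 - b ^ 2) * Real.sqrt (4 * a ^ 2 - b ^ 2) /
        (a ^ 2 + 2 * b ^ 2) := by
      apply div_nonneg (mul_nonneg (mul_nonneg hbnn (Real.sqrt_nonneg _)) (Real.sqrt_nonneg _))
        h2abpos.le
    have hsq : b' ^ 2 = (b * Real.sqrt (a ^ 2 - b ^ 2) * Real.sqrt (4 * a ^ 2 - b ^ 2) /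
        (a ^ 2 + 2 * b ^ 2)) ^ 2 := by
      rw [hb', div_pow, div_pow, mul_pow, mul_pow, mul_pow, Real.sq_sqrt habnn, Real.sq_sqrt h4abnn,
        hab, h4ab, h2ab, hb, hR'2, hu'2]
      field_simp
      ring
    rw [← Real.sqrt_sq hL, hsq, Real.sqrt_sq hRH]
end

section
/- Let R > 0 and u > √3. Define in ℝ² the Beltrami points P₂ = (−R/√(u² − 3), −Ru/√(u² − 3)) and U₂ = (R/√(u² − 3), −Ru/√(u² − 3)), and the isodynamic points X₁₅ = (0, R(√3 − u)/√(u² − 3)) and X₁₆ = (0, −R(√3 + u)/√(u² − 3)). Then dist(P₂, U₂) = dist(X₁₅, P₂) = dist(X₁₅, U₂) = dist(X₁₆, P₂) = dist(X₁₆, U₂) = 2R/√(u² − 3); in particular the triangles X₁₅P₂U₂ and X₁₆P₂U₂ are equilateral, and the two circles of radius ρ = 2R/√(u² − 3) centered at P₂ and U₂ intersect exactly in the points X₁₅ and X₁₆. -/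
/-!
With `a = R / √(u² - 3)` and `y = -u a`, the Beltrami points are `(∓a, y)` and the isodynamic
points are `(0, y ± √3 a)`, the apexes of the two equilateral triangles on the segment `P₂U₂` of
length `2a`. Subtracting the equations of the two circles of radius `2a` about `P₂` and `U₂`
forces the first coordinate to vanish, and then the second one satisfies `(y' - y)² = 3a²`.
-/

open Real Metric

namespace EuclideanSpace

variable {p q z : EuclideanSpace ℝ (Fin 2)}

theorem dist_eq_iff_of_ofLp_eq {a b c d r : ℝ} (hp : p.ofLp = ![a, b]) (hq : q.ofLp = ![c, d])
    (hr : 0 ≤ r) : dist p q = r ↔ (a - c) ^ 2 + (b - d) ^ 2 = r ^ 2 := by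
  rw [← sq_eq_sq₀ dist_nonneg hr, dist_eq, sq_sqrt (by positivity), Fin.sum_univ_two, hp, hq]
  simp [Real.dist_eq, sq_abs]

section Equilateral

variable {x y a : ℝ}

theorem dist_eq_two_mul_of_base (ha : 0 ≤ a) (hp : p.ofLp = ![x - a, y])
    (hq : q.ofLp = ![x + a, y]) : dist p q = 2 * a :=
  (dist_eq_iff_of_ofLp_eq hp hq (by positivity)).2 (by ring)

theorem dist_eq_two_mul_of_apex {s t : ℝ} (ha : 0 ≤ a) (hs : s ^ 2 = a ^ 2)
    (ht : t ^ 2 = 3 * a ^ 2) (hz : z.ofLp = ![x, y + t]) (hp : p.ofLp = ![x + s, y]) :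
    dist z p = 2 * a :=
  (dist_eq_iff_of_ofLp_eq hz hp (by positivity)).2 (by linear_combination hs + ht)

theorem sphere_inter_sphere_eq_apexes {z₁ z₂ : EuclideanSpace ℝ (Fin 2)} (ha : 0 < a)
    (hp : p.ofLp = ![x - a, y]) (hq : q.ofLp = ![x + a, y])
    (hz₁ : z₁.ofLp = ![x, y + √3 * a]) (hz₂ : z₂.ofLp = ![x, y + -(√3 * a)]) :
    sphere p (2 * a) ∩ sphere q (2 * a) = {z₁, z₂} := by
  have hp' : p.ofLp = ![x + -a, y] := by rw [hp, sub_eq_add_neg]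
  have hneg : (-a) ^ 2 = a ^ 2 := neg_sq a
  have h3 : (√3 * a) ^ 2 = 3 * a ^ 2 := by rw [mul_pow, sq_sqrt (by norm_num)]
  have h3' : (-(√3 * a)) ^ 2 = 3 * a ^ 2 := by rw [neg_sq, h3]
  ext w
  simp only [Set.mem_inter_iff, mem_sphere, Set.mem_insert_iff, Set.mem_singleton_iff]
  constructor
  · rintro ⟨hwp, hwq⟩
    have hw : w.ofLp = ![w 0, w 1] := by ext i; fin_cases i <;> rfl
    rw [dist_eq_iff_of_ofLp_eq hw hp (by positivity)] at hwp
    rw [dist_eq_iff_of_ofLp_eq hw hq (by positivity)] at hwq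
    have hw₀ : w 0 = x := by
      have : 4 * a * (w 0 - x) = 0 := by linear_combination hwp - hwq
      linarith [(mul_eq_zero.1 this).resolve_left (by positivity)]
    have hw₁ : (w 1 - y) ^ 2 = (√3 * a) ^ 2 := by
      rw [h3]
      subst hw₀
      linear_combination hwp
    rcases sq_eq_sq_iff_eq_or_eq_neg.1 hw₁ with h | h
    · left
      apply WithLp.ofLp_injective
      rw [hw, hz₁, hw₀, ← h, add_sub_cancel]
    · right
      apply WithLp.ofLp_injective
      rw [hw, hz₂, hw₀, ← h, add_sub_cancel]
  · rintro (rfl | rfl)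
    · exact ⟨dist_eq_two_mul_of_apex ha.le hneg h3 hz₁ hp',
        dist_eq_two_mul_of_apex ha.le rfl h3 hz₁ hq⟩
    · exact ⟨dist_eq_two_mul_of_apex ha.le hneg h3' hz₂ hp',
        dist_eq_two_mul_of_apex ha.le rfl h3' hz₂ hq⟩

end Equilateral

end EuclideanSpace

theorem stmt_5 (R u : ℝ) (hR : 0 < R) (hu : Real.sqrt 3 < u)
    (P2 U2 X15 X16 : EuclideanSpace ℝ (Fin 2))
    (hP2 : P2 = ![-(R / Real.sqrt (u ^ 2 - 3)), -(R * u / Real.sqrt (u ^ 2 - 3))])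
    (hU2 : U2 = ![R / Real.sqrt (u ^ 2 - 3), -(R * u / Real.sqrt (u ^ 2 - 3))])
    (h15 : X15 = ![0, R * (Real.sqrt 3 - u) / Real.sqrt (u ^ 2 - 3)])
    (h16 : X16 = ![0, -(R * (Real.sqrt 3 + u) / Real.sqrt (u ^ 2 - 3))]) :
    dist P2 U2 = 2 * R / Real.sqrt (u ^ 2 - 3) ∧
    dist X15 P2 = 2 * R / Real.sqrt (u ^ 2 - 3) ∧
    dist X15 U2 = 2 * R / Real.sqrt (u ^ 2 - 3) ∧
    dist X16 P2 = 2 * R / Real.sqrt (u ^ 2 - 3) ∧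
    dist X16 U2 = 2 * R / Real.sqrt (u ^ 2 - 3) ∧
    Metric.sphere P2 (2 * R / Real.sqrt (u ^ 2 - 3)) ∩
        Metric.sphere U2 (2 * R / Real.sqrt (u ^ 2 - 3)) = {X15, X16} := by
  have hu3 : 0 < u ^ 2 - 3 := by
    nlinarith [sqrt_nonneg 3, sq_sqrt (show (0 : ℝ) ≤ 3 by norm_num)]
  rw [mul_div_assoc]
  set a := R / √(u ^ 2 - 3)
  set y := -(R * u / √(u ^ 2 - 3))
  have ha : 0 < a := div_pos hR (sqrt_pos.2 hu3)
  have hP : P2.ofLp = ![0 - a, y] := by rw [hP2, zero_sub]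
  have hU : U2.ofLp = ![0 + a, y] := by rw [hU2, zero_add]
  have h₁ : X15.ofLp = ![0, y + √3 * a] := by rw [h15]; congr 2; ring
  have h₂ : X16.ofLp = ![0, y + -(√3 * a)] := by rw [h16]; congr 2; ring
  have hcircles := EuclideanSpace.sphere_inter_sphere_eq_apexes ha hP hU h₁ h₂
  have hX15 : X15 ∈ sphere P2 (2 * a) ∩ sphere U2 (2 * a) := hcircles ▸ Or.inl rfl
  have hX16 : X16 ∈ sphere P2 (2 * a) ∩ sphere U2 (2 * a) := hcircles ▸ Or.inr rfl
  exact ⟨EuclideanSpace.dist_eq_two_mul_of_base ha.le hP hU, hX15.1, hX15.2, hX16.1, hX16.2,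
    hcircles⟩
end

section
/- Let R > 0 and u > √3, and set ρ = 2R/√(u² − 3). The circles of radius ρ centered at P₂ = (−R/√(u² − 3), −Ru/√(u² − 3)) and at U₂ = (R/√(u² − 3), −Ru/√(u² − 3)) are each orthogonal to the circle of radius R centered at the origin; that is, ‖P₂‖² = R² + ρ² and ‖U₂‖² = R² + ρ². -/
open Real

theorem stmt_7 (R u ρ : ℝ) (hR : 0 < R) (hu : Real.sqrt 3 < u)
    (hρ : ρ = 2 * R / Real.sqrt (u ^ 2 - 3))
    (P2 U2 : EuclideanSpace ℝ (Fin 2))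
    (hP2 : P2 = ![-(R / Real.sqrt (u ^ 2 - 3)), -(R * u / Real.sqrt (u ^ 2 - 3))])
    (hU2 : U2 = ![R / Real.sqrt (u ^ 2 - 3), -(R * u / Real.sqrt (u ^ 2 - 3))]) :
    ‖P2‖ ^ 2 = R ^ 2 + ρ ^ 2 ∧ ‖U2‖ ^ 2 = R ^ 2 + ρ ^ 2 := by
  have h3 : (0:ℝ) ≤ 3 := by norm_num
  have hu0 : 0 < u := lt_of_le_of_lt (Real.sqrt_nonneg 3) hu
  have hpos : 0 < u ^ 2 - 3 := by
    have := Real.sq_sqrt h3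
    nlinarith [Real.sq_sqrt h3, Real.sqrt_nonneg 3]
  have hs : 0 < Real.sqrt (u ^ 2 - 3) := Real.sqrt_pos.mpr hpos
  have hsq : Real.sqrt (u ^ 2 - 3) ^ 2 = u ^ 2 - 3 := Real.sq_sqrt hpos.le
  have key : ∀ v : EuclideanSpace ℝ (Fin 2), ‖v‖ ^ 2 = v 0 ^ 2 + v 1 ^ 2 := by
    intro v
    rw [EuclideanSpace.norm_eq, Real.sq_sqrt (by positivity)]
    simp [Fin.sum_univ_two, sq_abs]
  constructor
  · rw [key, hP2]
    simp only [Matrix.cons_val_zero, Matrix.cons_val_one, Matrix.head_cons]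
    rw [hρ]
    field_simp
    nlinarith [hsq]
  · rw [key, hU2]
    simp only [Matrix.cons_val_zero, Matrix.cons_val_one, Matrix.head_cons]
    rw [hρ]
    field_simp
    nlinarith [hsq]
end

section
/- For every t with 0 < t < π/3, let a(t) = √(2cos t − 1)/2 and b(t) = √((2cos t − 1)(1 − cos t))/√2. Then 2a(t)²/b(t) = √((2cos t − 1)/(2(1 − cos t))) and √(4a(t)² − b(t)²)/b(t) = cot(t/2). -/
open Real

theorem stmt_10 (t a b : ℝ) (ht0 : 0 < t) (ht1 : t < Real.pi / 3)
    (ha : a = Real.sqrt (2 * Real.cos t - 1) / 2)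
    (hb : b = Real.sqrt ((2 * Real.cos t - 1) * (1 - Real.cos t)) / Real.sqrt 2) :
    2 * a ^ 2 / b = Real.sqrt ((2 * Real.cos t - 1) / (2 * (1 - Real.cos t))) ∧
    Real.sqrt (4 * a ^ 2 - b ^ 2) / b = Real.cot (t / 2) := by
  have hpi : (0:ℝ) < Real.pi := Real.pi_pos
  have htpi : t ≤ Real.pi := le_of_lt (lt_of_lt_of_le ht1 (by linarith))
  have hc1 : 1/2 < Real.cos t := by
    have := Real.cos_lt_cos_of_nonneg_of_le_pi ht0.le (by linarith) ht1
    rwa [Real.cos_pi_div_three] at this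
  have hc2 : Real.cos t < 1 := by
    have := Real.cos_lt_cos_of_nonneg_of_le_pi le_rfl htpi ht0
    rwa [Real.cos_zero] at this
  set c := Real.cos t with hc
  have h2c : 0 < 2*c - 1 := by linarith
  have h1c : 0 < 1 - c := by linarith
  have h1c' : 0 < 1 + c := by linarith
  have ha2 : a^2 = (2*c-1)/4 := by
    rw [ha, div_pow, Real.sq_sqrt h2c.le]; norm_num
  have hb' : b = Real.sqrt ((2*c-1)*(1-c)/2) := by
    rw [hb, Real.sqrt_div (by positivity)]
  have hb2 : b^2 = (2*c-1)*(1-c)/2 := by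
    rw [hb', Real.sq_sqrt (by positivity)]
  have hbpos : 0 < b := by rw [hb']; positivity
  constructor
  · rw [ha2, hb']
    have h : 2 * ((2*c-1)/4) = Real.sqrt (((2*c-1)/2)^2) := by
      rw [Real.sqrt_sq (by positivity)]; ring
    rw [h, ← Real.sqrt_div (by positivity)]
    congr 1
    field_simp
  · have h4 : 4 * a^2 - b^2 = (2*c-1)*(1+c)/2 := by rw [ha2, hb2]; ring
    have hcot : Real.cot (t/2) = Real.sqrt ((1+c)/2) / Real.sqrt ((1-c)/2) := by
      rw [Real.cot_eq_cos_div_sin, Real.cos_half (by linarith) htpi,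
        Real.sin_half_eq_sqrt ht0.le (by linarith)]
    rw [h4, hb', hcot, ← Real.sqrt_div (by positivity), ← Real.sqrt_div (by positivity)]
    congr 1
    field_simp
end

section
/- Let 0 < t < π/3 and set u = cot(t/2). Then u > √3, the quantity u' = (u² + 3)/(2u) satisfies u' = (2 − cos t)/sin t and √3 < u' < u, and consequently there exists a unique t' ∈ (0, π/3) with cot(t'/2) = u', and this t' satisfies t' > t. -/
/-!
Since `cot` is strictly decreasing on `(0, π)` and `cot (π / 6) = √3`, the map
`t ↦ cot (t / 2)` is a decreasing bijection from `(0, π / 3)` onto `(√3, ∞)`. The map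
`u ↦ (u² + 3) / (2u)` is one step of Heron's method for `√3`, so it sends `(√3, ∞)` into itself
and strictly decreases `u`; pulling back along the bijection gives a unique `t'`, and `t' > t`.
The closed form `(2 - cos t) / sin t` comes from the double-angle formulas applied to
`u = cos (t / 2) / sin (t / 2)`.
-/

open Real Set

noncomputable def heronStep (a u : ℝ) : ℝ := (u ^ 2 + a) / (2 * u)

lemma sqrt_lt_heronStep {a u : ℝ} (ha : 0 ≤ a) (hu : √a < u) : √a < heronStep a u := by
  have hu0 : 0 < u := (sqrt_nonneg a).trans_lt hu
  rw [heronStep, lt_div_iff₀ (by positivity)]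
  nlinarith [sq_sqrt ha]

lemma heronStep_lt_self {a u : ℝ} (hu : √a < u) : heronStep a u < u := by
  have hu0 : 0 < u := (sqrt_nonneg a).trans_lt hu
  rw [heronStep, div_lt_iff₀ (by positivity)]
  nlinarith [sq_sqrt' (x := a), le_max_left a 0, sqrt_nonneg a]

namespace Real

lemma cot_sub_cot {x y : ℝ} (hx : sin x ≠ 0) (hy : sin y ≠ 0) :
    cot x - cot y = sin (y - x) / (sin x * sin y) := by
  rw [cot_eq_cos_div_sin, cot_eq_cos_div_sin, sin_sub]
  field_simp

lemma strictAntiOn_cot : StrictAntiOn cot (Ioo 0 π) := by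
  intro x hx y hy hxy
  have hsx := sin_pos_of_mem_Ioo hx
  have hsy := sin_pos_of_mem_Ioo hy
  rw [← sub_pos, cot_sub_cot hsx.ne' hsy.ne']
  have hyx : 0 < sin (y - x) :=
    sin_pos_of_pos_of_lt_pi (sub_pos.2 hxy) (by linarith [hx.1, hy.2])
  positivity

lemma strictAntiOn_cot_half : StrictAntiOn (fun x ↦ cot (x / 2)) (Ioo 0 (2 * π)) :=
  fun x hx y hy hxy ↦
    strictAntiOn_cot ⟨by linarith [hx.1], by linarith [hx.2]⟩
      ⟨by linarith [hy.1], by linarith [hy.2]⟩ (by linarith)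

lemma cot_arctan_inv (v : ℝ) : cot (arctan v⁻¹) = v := by
  rw [← tan_inv_eq_cot, tan_arctan, inv_inv]

lemma cot_pi_div_six : cot (π / 6) = √3 := by
  rw [← tan_inv_eq_cot, tan_pi_div_six, one_div, inv_inv]

lemma sqrt_three_lt_cot_half_iff {x : ℝ} (hx : x ∈ Ioo 0 (2 * π)) :
    √3 < cot (x / 2) ↔ x < π / 3 := by
  rw [← cot_pi_div_six, show π / 6 = π / 3 / 2 by ring]
  exact strictAntiOn_cot_half.lt_iff_gt ⟨by positivity, by linarith [pi_pos]⟩ hx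

lemma exists_cot_half_eq {v : ℝ} (hv : 0 < v) : ∃ x ∈ Ioo 0 (2 * π), cot (x / 2) = v := by
  refine ⟨2 * arctan v⁻¹, ⟨?_, ?_⟩, by rw [mul_div_cancel_left₀ _ two_ne_zero, cot_arctan_inv]⟩
  · have := arctan_strictMono (inv_pos.2 hv)
    rw [arctan_zero] at this
    positivity
  · linarith [arctan_lt_pi_div_two v⁻¹, pi_pos]

lemma heronStep_three_cot_half {t : ℝ} (ht : sin t ≠ 0) :
    heronStep 3 (cot (t / 2)) = (2 - cos t) / sin t := by
  obtain ⟨x, rfl⟩ : ∃ x, t = 2 * x := ⟨t / 2, by ring⟩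
  rw [sin_two_mul] at ht ⊢
  have hs : sin x ≠ 0 := fun h ↦ ht (by rw [h]; ring)
  have hc : cos x ≠ 0 := fun h ↦ ht (by rw [h]; ring)
  rw [mul_div_cancel_left₀ _ two_ne_zero, cos_two_mul, heronStep, cot_eq_cos_div_sin]
  field_simp
  linear_combination 3 * sin_sq_add_cos_sq x

end Real

theorem stmt_12 (t u u' : ℝ) (ht0 : 0 < t) (ht1 : t < Real.pi / 3)
    (hu : u = Real.cot (t / 2)) (hu' : u' = (u ^ 2 + 3) / (2 * u)) :
    Real.sqrt 3 < u ∧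
    u' = (2 - Real.cos t) / Real.sin t ∧
    Real.sqrt 3 < u' ∧ u' < u ∧
    (∃! t' : ℝ, t' ∈ Set.Ioo 0 (Real.pi / 3) ∧ Real.cot (t' / 2) = u') ∧
    (∀ t' : ℝ, t' ∈ Set.Ioo 0 (Real.pi / 3) → Real.cot (t' / 2) = u' → t < t') := by
  change u' = heronStep 3 u at hu'
  have hsub : Ioo 0 (π / 3) ⊆ Ioo 0 (2 * π) := Ioo_subset_Ioo_right (by linarith [pi_pos])
  have ht : t ∈ Ioo 0 (2 * π) := hsub ⟨ht0, ht1⟩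
  have hsqrt_u : √3 < u := hu ▸ (sqrt_three_lt_cot_half_iff ht).2 ht1
  have hsqrt_u' : √3 < u' := hu' ▸ sqrt_lt_heronStep (by norm_num) hsqrt_u
  have hu'_u : u' < u := hu' ▸ heronStep_lt_self hsqrt_u
  obtain ⟨s, hs, hs_cot⟩ := exists_cot_half_eq ((sqrt_nonneg 3).trans_lt hsqrt_u')
  have hs' : s ∈ Ioo 0 (π / 3) := ⟨hs.1, (sqrt_three_lt_cot_half_iff hs).1 (hs_cot ▸ hsqrt_u')⟩
  refine ⟨hsqrt_u, ?_, hsqrt_u', hu'_u, ⟨s, ⟨hs', hs_cot⟩, ?_⟩, ?_⟩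
  · rw [hu', hu, heronStep_three_cot_half (sin_pos_of_pos_of_lt_pi ht0 (by linarith)).ne']
  · exact fun y hy ↦ strictAntiOn_cot_half.injOn (hsub hy.1) hs (hy.2.trans hs_cot.symm)
  · intro t' ht' hcot
    exact (strictAntiOn_cot_half.lt_iff_gt (hsub ht') ht).1 (by rw [hcot, ← hu]; exact hu'_u)
end

section
/- Let t satisfy 0 < t < π/3 and 5cos t − 3 ≥ 0. Define the envelope points ξ₁(t) = (√(5cos t − 3)/(2√(cos t + 1)), −2 sin t/(cos t + 1)) and ξ₂(t) = (−√(5cos t − 3)/(2√(cos t + 1)), −2 sin t/(cos t + 1)). Then: (i) each ξᵢ(t) lies on the ellipse 4x² + y² = 1; (ii) each ξᵢ(t) lies on the inellipse ℰ_t, i.e. with a(t) = √(2cos t − 1)/2 and b(t) = √((2cos t − 1)(1 − cos t))/√2 it satisfies x²/a(t)² + (y + sin t)²/b(t)² = 1; and (iii) the foci of the ellipse 4x² + y² = 1 are (0, √3/2) and (0, −√3/2). -/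
/-!
With `c = cos t` and `s = sin t`, both membership claims are rational identities in `c`, `s`
modulo `s² + c² = 1`. For the foci: on the ellipse `b²x² + a²y² = a²b²` with `f² = b² - a²`,
the distances to `(0, ±f)` are `b ∓ f y / b`, which add up to `2b`.
-/

open Real

lemma sq_sqrt_div_two_mul_sqrt {u v : ℝ} (hu : 0 ≤ u) (hv : 0 ≤ v) :
    (√u / (2 * √v)) ^ 2 = u / (4 * v) := by
  rw [div_pow, mul_pow, sq_sqrt hu, sq_sqrt hv]
  norm_num

section Envelope

variable {c s : ℝ}

lemma envelope_mem_ellipse (hsc : s ^ 2 + c ^ 2 = 1) (hc : c + 1 ≠ 0) :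
    4 * ((5 * c - 3) / (4 * (c + 1))) + (2 * s / (c + 1)) ^ 2 = 1 := by
  field_simp
  linear_combination 4 * hsc

lemma envelope_mem_inellipse (hsc : s ^ 2 + c ^ 2 = 1) (hc₁ : c + 1 ≠ 0) (hc₂ : 2 * c - 1 ≠ 0) :
    (5 * c - 3) / (4 * (c + 1)) / ((2 * c - 1) / 4) +
      (-(2 * s / (c + 1)) + s) ^ 2 / ((2 * c - 1) * (1 - c) / 2) = 1 := by
  rcases eq_or_ne c 1 with rfl | hc
  -- the second denominator vanishes, and the term is `0 / 0 = 0`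
  · obtain rfl : s = 0 := pow_eq_zero_iff two_ne_zero |>.mp (by linarith)
    norm_num
  · have hc' : 1 - c ≠ 0 := sub_ne_zero.mpr hc.symm
    field_simp
    rw [div_eq_iff (by rwa [mul_comm])]
    linear_combination 2 * (c - 1) ^ 2 * hsc

end Envelope

lemma EuclideanSpace.dist_toLp_fin_two (p : EuclideanSpace ℝ (Fin 2)) (u v : ℝ) :
    dist p (WithLp.toLp 2 ![u, v] : EuclideanSpace ℝ (Fin 2)) =
      √((p 0 - u) ^ 2 + (p 1 - v) ^ 2) := by
  rw [EuclideanSpace.dist_eq, Fin.sum_univ_two]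
  simp [Real.dist_eq, sq_abs]

theorem dist_add_dist_foci_eq {a b f : ℝ} (ha : a ≠ 0) (hb : 0 < b) (hf : f ^ 2 + a ^ 2 = b ^ 2)
    {p : EuclideanSpace ℝ (Fin 2)} (hp : b ^ 2 * p 0 ^ 2 + a ^ 2 * p 1 ^ 2 = a ^ 2 * b ^ 2) :
    dist p (WithLp.toLp 2 ![0, f] : EuclideanSpace ℝ (Fin 2)) +
      dist p (WithLp.toLp 2 ![0, -f] : EuclideanSpace ℝ (Fin 2)) = 2 * b := by
  rw [EuclideanSpace.dist_toLp_fin_two, EuclideanSpace.dist_toLp_fin_two]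
  set X := p 0
  set Y := p 1
  have hY : Y ^ 2 ≤ b ^ 2 := by
    have : a ^ 2 * Y ^ 2 ≤ a ^ 2 * b ^ 2 := by nlinarith [sq_nonneg X, sq_nonneg b]
    exact le_of_mul_le_mul_left this (by positivity)
  have hfY : |f * Y| ≤ b ^ 2 := by
    refine abs_le_of_sq_le_sq ?_ (by positivity)
    rw [mul_pow, sq (b ^ 2)]
    exact mul_le_mul (by nlinarith) hY (sq_nonneg Y) (sq_nonneg b)
  have hdist (g : ℝ) (hg : g ^ 2 = f ^ 2) : (X - 0) ^ 2 + (Y - g) ^ 2 = (b - g * Y / b) ^ 2 := by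
    field_simp
    linear_combination hp + (b ^ 2 - Y ^ 2) * hf + (b ^ 2 - Y ^ 2) * hg
  have hle (g : ℝ) (hg : |g| = |f|) : 0 ≤ b - g * Y / b := by
    rw [sub_nonneg, div_le_iff₀ hb, ← sq]
    exact (le_abs_self _).trans (by rwa [abs_mul, hg, ← abs_mul])
  rw [hdist f rfl, hdist (-f) (neg_sq f), sqrt_sq (hle f rfl), sqrt_sq (hle (-f) (abs_neg f))]
  ring

theorem stmt_13_general (t : ℝ)
    (ht2 : 0 ≤ 5 * Real.cos t - 3)
    (x₁ x₂ y : ℝ)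
    (hx₁ : x₁ = Real.sqrt (5 * Real.cos t - 3) / (2 * Real.sqrt (Real.cos t + 1)))
    (hx₂ : x₂ = -(Real.sqrt (5 * Real.cos t - 3) / (2 * Real.sqrt (Real.cos t + 1))))
    (hy : y = -(2 * Real.sin t / (Real.cos t + 1)))
    (a b : ℝ)
    (ha : a = Real.sqrt (2 * Real.cos t - 1) / 2)
    (hb : b = Real.sqrt ((2 * Real.cos t - 1) * (1 - Real.cos t)) / Real.sqrt 2) :
    -- (i) the envelope points lie on the ellipse 4x² + y² = 1
    (4 * x₁ ^ 2 + y ^ 2 = 1 ∧ 4 * x₂ ^ 2 + y ^ 2 = 1) ∧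
    -- (ii) the envelope points lie on the inellipse ℰ_t
    (x₁ ^ 2 / a ^ 2 + (y + Real.sin t) ^ 2 / b ^ 2 = 1 ∧
     x₂ ^ 2 / a ^ 2 + (y + Real.sin t) ^ 2 / b ^ 2 = 1) ∧
    -- (iii) the foci of the ellipse 4x² + y² = 1 are (0, ±√3/2)
    (∀ p : EuclideanSpace ℝ (Fin 2), 4 * (p 0) ^ 2 + (p 1) ^ 2 = 1 →
      dist p (WithLp.toLp 2 ![0, Real.sqrt 3 / 2] : EuclideanSpace ℝ (Fin 2)) +
        dist p (WithLp.toLp 2 ![0, -(Real.sqrt 3 / 2)] : EuclideanSpace ℝ (Fin 2)) = 2) := by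
  have hc₁ : 0 < cos t + 1 := by linarith
  have hc₂ : 0 < 2 * cos t - 1 := by linarith
  have hx₁sq : x₁ ^ 2 = (5 * cos t - 3) / (4 * (cos t + 1)) :=
    hx₁ ▸ sq_sqrt_div_two_mul_sqrt ht2 hc₁.le
  have hx₂sq : x₂ ^ 2 = x₁ ^ 2 := by rw [hx₂, neg_sq, hx₁]
  have ha2 : a ^ 2 = (2 * cos t - 1) / 4 := by
    rw [ha, div_pow, sq_sqrt hc₂.le]
    norm_num
  have hb2 : b ^ 2 = (2 * cos t - 1) * (1 - cos t) / 2 := by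
    rw [hb, div_pow, sq_sqrt (mul_nonneg hc₂.le (sub_nonneg.mpr (cos_le_one t))),
      sq_sqrt zero_le_two]
  have hellipse : 4 * x₁ ^ 2 + y ^ 2 = 1 := by
    rw [hx₁sq, hy, neg_sq]
    exact envelope_mem_ellipse (sin_sq_add_cos_sq t) hc₁.ne'
  have hinellipse : x₁ ^ 2 / a ^ 2 + (y + sin t) ^ 2 / b ^ 2 = 1 := by
    rw [hx₁sq, ha2, hy, hb2]
    exact envelope_mem_inellipse (sin_sq_add_cos_sq t) hc₁.ne' hc₂.ne'
  refine ⟨⟨hellipse, hx₂sq ▸ hellipse⟩, ⟨hinellipse, hx₂sq ▸ hinellipse⟩, fun p hp => ?_⟩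
  have hfoci : (√3 / 2) ^ 2 + (1 / 2) ^ 2 = (1 : ℝ) ^ 2 := by
    rw [div_pow, sq_sqrt zero_le_three]
    norm_num
  exact (dist_add_dist_foci_eq one_half_pos.ne' one_pos hfoci (by linear_combination hp / 4)).trans
    (mul_one 2)

theorem stmt_13 (t : ℝ) (ht0 : 0 < t) (ht1 : t < Real.pi / 3)
    (ht2 : 0 ≤ 5 * Real.cos t - 3)
    (x₁ x₂ y : ℝ)
    (hx₁ : x₁ = Real.sqrt (5 * Real.cos t - 3) / (2 * Real.sqrt (Real.cos t + 1)))
    (hx₂ : x₂ = -(Real.sqrt (5 * Real.cos t - 3) / (2 * Real.sqrt (Real.cos t + 1))))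
    (hy : y = -(2 * Real.sin t / (Real.cos t + 1)))
    (a b : ℝ)
    (ha : a = Real.sqrt (2 * Real.cos t - 1) / 2)
    (hb : b = Real.sqrt ((2 * Real.cos t - 1) * (1 - Real.cos t)) / Real.sqrt 2) :
    -- (i) the envelope points lie on the ellipse 4x² + y² = 1
    (4 * x₁ ^ 2 + y ^ 2 = 1 ∧ 4 * x₂ ^ 2 + y ^ 2 = 1) ∧
    -- (ii) the envelope points lie on the inellipse ℰ_t
    (x₁ ^ 2 / a ^ 2 + (y + Real.sin t) ^ 2 / b ^ 2 = 1 ∧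
     x₂ ^ 2 / a ^ 2 + (y + Real.sin t) ^ 2 / b ^ 2 = 1) ∧
    -- (iii) the foci of the ellipse 4x² + y² = 1 are (0, ±√3/2)
    (∀ p : EuclideanSpace ℝ (Fin 2), 4 * (p 0) ^ 2 + (p 1) ^ 2 = 1 →
      dist p (WithLp.toLp 2 ![0, Real.sqrt 3 / 2] : EuclideanSpace ℝ (Fin 2)) +
        dist p (WithLp.toLp 2 ![0, -(Real.sqrt 3 / 2)] : EuclideanSpace ℝ (Fin 2)) = 2) :=
  stmt_13_general t ht2 x₁ x₂ y hx₁ hx₂ hy a b ha hb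
end

section
/- Let t satisfy 0 < t < π/3 and 5cos t − 3 > 0. Then the envelope points ξ₁(t) = (√(5cos t − 3)/(2√(cos t + 1)), −2 sin t/(cos t + 1)) and ξ₂(t) = (−√(5cos t − 3)/(2√(cos t + 1)), −2 sin t/(cos t + 1)) lie on the Brocard circle 𝒦_t; that is, each satisfies x² + (y − (cos t − 2)/(2 sin t))² = ((2cos t − 1)/(2 sin t))². -/
open Real

lemma brocard_circle_eq_of_sq_add_sq_eq_one {c s : ℝ} (hcs : s ^ 2 + c ^ 2 = 1) (hs : s ≠ 0) :
    (5 * c - 3) / (4 * (c + 1)) + (-(2 * s / (c + 1)) - (c - 2) / (2 * s)) ^ 2 =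
      ((2 * c - 1) / (2 * s)) ^ 2 := by
  have hc : c + 1 ≠ 0 := by
    intro h
    have : s ^ 2 = 0 := by nlinarith
    exact hs (pow_eq_zero_iff two_ne_zero |>.mp this)
  field_simp
  -- The cleared equation is quadratic in `s²` with the root `s² = 1 - c²`; this is the other factor.
  linear_combination (64 * s ^ 2 + 64 * (1 - c ^ 2) + 4 * (c + 1) * (13 * c - 19)) * hcs

lemma sq_sqrt_div_two_mul_sqrt_s14 {a b : ℝ} (ha : 0 ≤ a) (hb : 0 ≤ b) :
    (√a / (2 * √b)) ^ 2 = a / (4 * b) := by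
  rw [div_pow, mul_pow, sq_sqrt ha, sq_sqrt hb]
  norm_num

theorem stmt_14 (t : ℝ) (ht0 : 0 < t) (ht1 : t < Real.pi / 3)
    (ht2 : 0 < 5 * Real.cos t - 3)
    (x₁ x₂ y : ℝ)
    (hx₁ : x₁ = Real.sqrt (5 * Real.cos t - 3) / (2 * Real.sqrt (Real.cos t + 1)))
    (hx₂ : x₂ = -(Real.sqrt (5 * Real.cos t - 3) / (2 * Real.sqrt (Real.cos t + 1))))
    (hy : y = -(2 * Real.sin t / (Real.cos t + 1))) :
    x₁ ^ 2 + (y - (Real.cos t - 2) / (2 * Real.sin t)) ^ 2 =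
        ((2 * Real.cos t - 1) / (2 * Real.sin t)) ^ 2 ∧
    x₂ ^ 2 + (y - (Real.cos t - 2) / (2 * Real.sin t)) ^ 2 =
        ((2 * Real.cos t - 1) / (2 * Real.sin t)) ^ 2 := by
  have hsin : sin t ≠ 0 :=
    (sin_pos_of_pos_of_lt_pi ht0 (by linarith [pi_pos])).ne'
  have hx₁_sq : x₁ ^ 2 = (5 * cos t - 3) / (4 * (cos t + 1)) := by
    rw [hx₁, sq_sqrt_div_two_mul_sqrt_s14 ht2.le (by linarith [neg_one_le_cos t])]
  have hx₂_sq : x₂ ^ 2 = x₁ ^ 2 := by rw [hx₁, hx₂, neg_sq]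
  have hcircle : x₁ ^ 2 + (y - (cos t - 2) / (2 * sin t)) ^ 2 =
      ((2 * cos t - 1) / (2 * sin t)) ^ 2 := by
    rw [hx₁_sq, hy]
    exact brocard_circle_eq_of_sq_add_sq_eq_one (sin_sq_add_cos_sq t) hsin
  exact ⟨hcircle, hx₂_sq ▸ hcircle⟩
end

section
/- Define sequences by u₀ > √3, R₀ > 0, u_{n+1} = (u_n² + 3)/(2u_n), and R_{n+1} = R_n·√(u_n² − 3)/(2u_n). Then (u_n) is strictly decreasing with u_n > √3 for all n, u_n converges to √3, and R_n is strictly decreasing and converges to 0. -/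
open Real Filter

theorem stmt_15 (u R : ℕ → ℝ) (hu0 : Real.sqrt 3 < u 0) (hR0 : 0 < R 0)
    (hurec : ∀ n, u (n + 1) = (u n ^ 2 + 3) / (2 * u n))
    (hRrec : ∀ n, R (n + 1) = R n * Real.sqrt (u n ^ 2 - 3) / (2 * u n)) :
    StrictAnti u ∧ (∀ n, Real.sqrt 3 < u n) ∧
      Tendsto u atTop (nhds (Real.sqrt 3)) ∧
      StrictAnti R ∧ Tendsto R atTop (nhds 0) := by
  set s := Real.sqrt 3 with hs
  have hs2 : s ^ 2 = 3 := Real.sq_sqrt (by norm_num)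
  have hs0 : 0 < s := Real.sqrt_pos.mpr (by norm_num)
  -- lower bound
  have hlb : ∀ n, s < u n := by
    intro n
    induction n with
    | zero => exact hu0
    | succ n ih =>
      have hupos : 0 < u n := hs0.trans ih
      rw [hurec n, lt_div_iff₀ (by positivity)]
      nlinarith [mul_pos (sub_pos.mpr ih) (sub_pos.mpr ih)]
  have hupos : ∀ n, 0 < u n := fun n => hs0.trans (hlb n)
  -- strict decrease of u
  have hanti : StrictAnti u := by
    apply strictAnti_nat_of_succ_lt
    intro n
    rw [hurec n, div_lt_iff₀ (by have := hupos n; positivity)]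
    nlinarith [hlb n, hs0]
  -- geometric decay of u n - s
  have hdecay : ∀ n, u (n + 1) ≤ s + (u n - s) / 2 := by
    intro n
    rw [hurec n, div_le_iff₀ (by have := hupos n; positivity)]
    nlinarith [mul_lt_mul_of_pos_left (hlb n) hs0, hlb n]
  have hub : ∀ n, u n ≤ s + (u 0 - s) * (1 / 2 : ℝ) ^ n := by
    intro n
    induction n with
    | zero => simp
    | succ n ih =>
      calc u (n + 1) ≤ s + (u n - s) / 2 := hdecay n
        _ ≤ s + (u 0 - s) * (1 / 2 : ℝ) ^ (n + 1) := by
            have : u n - s ≤ (u 0 - s) * (1 / 2 : ℝ) ^ n := by linarith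
            rw [pow_succ]
            linarith
  -- tendsto u
  have hgeom : Tendsto (fun n : ℕ => (1 / 2 : ℝ) ^ n) atTop (nhds 0) :=
    tendsto_pow_atTop_nhds_zero_of_lt_one (by norm_num) (by norm_num)
  have htu : Tendsto u atTop (nhds s) := by
    have h1 : Tendsto (fun n : ℕ => s + (u 0 - s) * (1 / 2 : ℝ) ^ n) atTop (nhds s) := by
      have := (hgeom.const_mul (u 0 - s)).const_add s
      simpa using this
    exact tendsto_of_tendsto_of_tendsto_of_le_of_le tendsto_const_nhds h1
      (fun n => (hlb n).le) hub
  -- R positivity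
  have hsq : ∀ n, Real.sqrt (u n ^ 2 - 3) < u n := by
    intro n
    have h1 : u n ^ 2 - 3 < u n ^ 2 := by linarith
    calc Real.sqrt (u n ^ 2 - 3) < Real.sqrt (u n ^ 2) := by
          apply Real.sqrt_lt_sqrt _ h1
          nlinarith [hlb n, hs0, hs2]
      _ = u n := by rw [Real.sqrt_sq (hupos n).le]
  have hsqpos : ∀ n, 0 < Real.sqrt (u n ^ 2 - 3) := by
    intro n
    apply Real.sqrt_pos.mpr
    nlinarith [hlb n, hs0, hs2]
  have hRpos : ∀ n, 0 < R n := by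
    intro n
    induction n with
    | zero => exact hR0
    | succ n ih =>
      rw [hRrec n]
      have h1 := hsqpos n
      have h2 := hupos n
      positivity
  have hRhalf : ∀ n, R (n + 1) ≤ R n / 2 := by
    intro n
    rw [hRrec n, div_le_div_iff₀ (by have := hupos n; positivity) (by norm_num)]
    calc R n * Real.sqrt (u n ^ 2 - 3) * 2 ≤ R n * u n * 2 := by
          nlinarith [hsq n, hRpos n]
      _ ≤ R n * (2 * u n) := by ring_nf; linarith
  have hRanti : StrictAnti R := by
    apply strictAnti_nat_of_succ_lt
    intro n
    calc R (n + 1) ≤ R n / 2 := hRhalf n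
      _ < R n := by linarith [hRpos n]
  have hRub : ∀ n, R n ≤ R 0 * (1 / 2 : ℝ) ^ n := by
    intro n
    induction n with
    | zero => simp
    | succ n ih =>
      calc R (n + 1) ≤ R n / 2 := hRhalf n
        _ ≤ R 0 * (1 / 2 : ℝ) ^ (n + 1) := by rw [pow_succ]; linarith
  have htR : Tendsto R atTop (nhds 0) := by
    have h1 : Tendsto (fun n : ℕ => R 0 * (1 / 2 : ℝ) ^ n) atTop (nhds 0) := by
      simpa using hgeom.const_mul (R 0)
    exact tendsto_of_tendsto_of_tendsto_of_le_of_le tendsto_const_nhds h1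
      (fun n => (hRpos n).le) hRub
  exact ⟨hanti, hlb, htu, hRanti, htR⟩
end

section
/- Let a(t) = √(2cos t − 1)/2 and b(t) = √((2cos t − 1)(1 − cos t))/√2 for t ∈ [0, π/3]. Then: (i) a is strictly decreasing on [0, π/3], with a(0) = 1/2 and a(π/3) = 0; (ii) 0 ≤ b(t) ≤ 1/4 for all t ∈ [0, π/3], with b(t) = 1/4 if and only if cos t = 3/4, and b(0) = b(π/3) = 0. -/
open Real

lemma cos_ge_half {t : ℝ} (ht : t ∈ Set.Icc 0 (Real.pi / 3)) : 1 / 2 ≤ Real.cos t := by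
  have h := Real.cos_pi_div_three
  have hpi := Real.pi_pos
  have : Real.cos (Real.pi / 3) ≤ Real.cos t := by
    apply Real.cos_le_cos_of_nonneg_of_le_pi ht.1 (by linarith [ht.2]) ht.2
  linarith

theorem stmt_18 (a b : ℝ → ℝ)
    (ha : ∀ t, a t = Real.sqrt (2 * Real.cos t - 1) / 2)
    (hb : ∀ t, b t = Real.sqrt ((2 * Real.cos t - 1) * (1 - Real.cos t)) / Real.sqrt 2) :
    (StrictAntiOn a (Set.Icc 0 (Real.pi / 3)) ∧ a 0 = 1 / 2 ∧ a (Real.pi / 3) = 0) ∧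
    ((∀ t ∈ Set.Icc 0 (Real.pi / 3), 0 ≤ b t ∧ b t ≤ 1 / 4) ∧
      (∀ t ∈ Set.Icc 0 (Real.pi / 3), b t = 1 / 4 ↔ Real.cos t = 3 / 4) ∧
      b 0 = 0 ∧ b (Real.pi / 3) = 0) := by
  have hpi := Real.pi_pos
  have h2 : (0:ℝ) < Real.sqrt 2 := Real.sqrt_pos.mpr (by norm_num)
  constructor
  · refine ⟨?_, ?_, ?_⟩
    · intro x hx y hy hxy
      rw [ha, ha]
      have hcy := cos_ge_half hy
      have hlt : Real.cos y < Real.cos x := by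
        apply Real.cos_lt_cos_of_nonneg_of_le_pi hx.1 (by linarith [hy.2]) hxy
      have := Real.sqrt_lt_sqrt (x := 2 * Real.cos y - 1) (y := 2 * Real.cos x - 1)
        (by linarith) (by linarith)
      linarith
    · rw [ha]; norm_num
    · rw [ha, Real.cos_pi_div_three]; norm_num
  · have key : ∀ t ∈ Set.Icc 0 (Real.pi / 3),
        (2 * Real.cos t - 1) * (1 - Real.cos t) = 1/8 - 2 * (Real.cos t - 3/4)^2 := by
      intro t _; ring
    refine ⟨?_, ?_, ?_, ?_⟩
    · intro t ht
      have hc := cos_ge_half ht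
      have hc1 := Real.cos_le_one t
      have hP : (0:ℝ) ≤ (2 * Real.cos t - 1) * (1 - Real.cos t) := by nlinarith
      constructor
      · rw [hb]; positivity
      · rw [hb, div_le_iff₀ h2]
        have h18 : (2 * Real.cos t - 1) * (1 - Real.cos t) ≤ 1/8 := by
          nlinarith [sq_nonneg (Real.cos t - 3/4)]
        have : Real.sqrt ((2 * Real.cos t - 1) * (1 - Real.cos t)) ≤ Real.sqrt (1/8) :=
          Real.sqrt_le_sqrt h18
        have h8 : Real.sqrt (1/8) = 1/4 * Real.sqrt 2 := by
          rw [show (1:ℝ)/8 = (1/4)^2 * 2 by norm_num, Real.sqrt_mul (by positivity),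
            Real.sqrt_sq (by norm_num)]
        linarith
    · intro t ht
      have hc := cos_ge_half ht
      have hc1 := Real.cos_le_one t
      have hP : (0:ℝ) ≤ (2 * Real.cos t - 1) * (1 - Real.cos t) := by nlinarith
      rw [hb]
      constructor
      · intro h
        have : Real.sqrt ((2 * Real.cos t - 1) * (1 - Real.cos t)) = Real.sqrt 2 / 4 := by
          field_simp at h; linarith
        have hsq : (2 * Real.cos t - 1) * (1 - Real.cos t) = 1/8 := by
          have := congrArg (fun x => x^2) this
          rw [Real.sq_sqrt hP, div_pow, Real.sq_sqrt (by norm_num : (0:ℝ) ≤ 2)] at this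
          linarith
        nlinarith [sq_nonneg (Real.cos t - 3/4)]
      · intro h
        rw [h]
        rw [show (2 * (3/4:ℝ) - 1) * (1 - 3/4) = (Real.sqrt 2 / 4)^2 by
          rw [div_pow, Real.sq_sqrt (by norm_num : (0:ℝ) ≤ 2)]; norm_num]
        rw [Real.sqrt_sq (by positivity)]
        field_simp
    · rw [hb]; simp [Real.cos_zero]
    · rw [hb, Real.cos_pi_div_three]; norm_num
end

section
/- Let b(t) = √((2cos t − 1)(1 − cos t))/√2 and define V(t) = −b(t) − sin t for t ∈ [0, π/3] (the y-coordinate of the lower vertex of the inellipse ℰ_t). Then V(t) ≥ −1 for all t ∈ [0, π/3], with equality if and only if cos t = 3/5, and V(π/3) = −√3/2. -/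
open Real

theorem stmt_19 (b V : ℝ → ℝ)
    (hb : ∀ t, b t = Real.sqrt ((2 * Real.cos t - 1) * (1 - Real.cos t)) / Real.sqrt 2)
    (hV : ∀ t, V t = -b t - Real.sin t) :
    (∀ t ∈ Set.Icc 0 (Real.pi / 3), -1 ≤ V t) ∧
    (∀ t ∈ Set.Icc 0 (Real.pi / 3), V t = -1 ↔ Real.cos t = 3 / 5) ∧
    V (Real.pi / 3) = -(Real.sqrt 3 / 2) := by
  have hpi := Real.pi_pos
  -- common facts for t ∈ Icc 0 (π/3)
  have key : ∀ t ∈ Set.Icc (0:ℝ) (Real.pi / 3),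
      (1/2 ≤ Real.cos t ∧ Real.cos t ≤ 1 ∧ 0 ≤ Real.sin t ∧ Real.sin t ≤ 1) := by
    intro t ht
    obtain ⟨ht0, ht1⟩ := ht
    have htpi : t ≤ Real.pi := le_trans ht1 (by linarith)
    refine ⟨?_, Real.cos_le_one t, Real.sin_nonneg_of_nonneg_of_le_pi ht0 htpi,
      Real.sin_le_one t⟩
    have := Real.cos_le_cos_of_nonneg_of_le_pi ht0 (by linarith) ht1
    rwa [Real.cos_pi_div_three] at this
  have bsq : ∀ t ∈ Set.Icc (0:ℝ) (Real.pi / 3),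
      0 ≤ b t ∧ (b t)^2 = (2 * Real.cos t - 1) * (1 - Real.cos t) / 2 := by
    intro t ht
    obtain ⟨hc1, hc2, hs0, hs1⟩ := key t ht
    have hA : 0 ≤ (2 * Real.cos t - 1) * (1 - Real.cos t) := by nlinarith
    constructor
    · rw [hb t]
      positivity
    · rw [hb t, div_pow, Real.sq_sqrt hA, Real.sq_sqrt (by norm_num : (0:ℝ) ≤ 2)]
  have main : ∀ t ∈ Set.Icc (0:ℝ) (Real.pi / 3), b t ≤ 1 - Real.sin t := by
    intro t ht
    obtain ⟨hc1, hc2, hs0, hs1⟩ := key t ht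
    obtain ⟨hb0, hb2⟩ := bsq t ht
    have hsc := Real.sin_sq_add_cos_sq t
    nlinarith [sq_nonneg (5 * Real.cos t - 3), sq_nonneg (b t - (1 - Real.sin t))]
  refine ⟨?_, ?_, ?_⟩
  · intro t ht
    have := main t ht
    rw [hV t]
    linarith
  · intro t ht
    obtain ⟨hc1, hc2, hs0, hs1⟩ := key t ht
    obtain ⟨hb0, hb2⟩ := bsq t ht
    have hsc := Real.sin_sq_add_cos_sq t
    constructor
    · intro hVt
      rw [hV t] at hVt
      have hbe : b t = 1 - Real.sin t := by linarith
      have h2 : (b t)^2 = (1 - Real.sin t)^2 := by rw [hbe]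
      have h3 : (5 * Real.cos t - 3)^2 = 0 := by nlinarith
      have h4 : 5 * Real.cos t - 3 = 0 := by
        exact pow_eq_zero_iff (by norm_num) |>.mp h3
      linarith
    · intro hc
      have hs : Real.sin t = 4/5 := by nlinarith
      have hbval : b t = 1/5 := by nlinarith [sq_nonneg (b t - 1/5)]
      rw [hV t, hbval, hs]; norm_num
  · rw [hV _, hb _, Real.cos_pi_div_three, Real.sin_pi_div_three]
    norm_num
end
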